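/- If a permutation σ of [n] (n ≥ 2) has the form σ = π_L · 1 · π_R where π_L is a permutation on ℓ elements with q descents and π_R has d−q−1 descents (so des(σ) = d), then w(σ) = w(π_L · 1) + w(π_R) + des(π_R). -/

import Mathlib

/-!
Since `1` is the minimum of `σ = π_L · 1 · π_R`, splitting `σ` with a new maximum appended gives
the pieces of `π_L`, the singleton `1`, and `π_R` followed by that maximum; for `π_L · 1` the
pieces are the same except that the last block is the new maximum alone. So `w(σ) - w(π_L · 1)`
is `des + w` of `π_R` followed by a larger entry. Appending an increasing run of entries above all
others changes neither descents nor weight, because in the recursion the run just travels along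
in the last block. A strong induction on the length proves this, together with the fact that any
fuel exceeding the length already computes the weight.
-/

/-- Number of descents of a sequence. -/
def desL : List ℕ → ℕ
  | a :: b :: t => (if b < a then 1 else 0) + desL (b :: t)
  | _ => 0

/-- Repeatedly split a sequence just after its maximum element. -/
def splitLeftAux : ℕ → List ℕ → List (List ℕ)
  | 0, _ => []
  | _, [] => []
  | fuel + 1, l =>
    let i := l.idxOf (l.foldr Nat.max 0)
    l.take (i + 1) :: splitLeftAux fuel (l.drop (i + 1))

def splitLeft (l : List ℕ) : List (List ℕ) := splitLeftAux l.length l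

/-- Split a sequence at its minimum element, splitting the left part
repeatedly just after its maximum. -/
def splitAll (l : List ℕ) : List (List ℕ) :=
  let m := l.foldr Nat.min (l.headD 0)
  let i := l.idxOf m
  splitLeft (l.take i) ++ [[m]] ++ [l.drop (i + 1)]

/-- The weight of a sequence of distinct naturals (fuelled version; the fuel
`(length+2)^2` in `weightL` is more than the recursion depth ever needed). -/
def weightAux : ℕ → List ℕ → ℕ
  | 0, _ => 0
  | fuel + 1, l =>
    if l.length ≤ 1 ∨ l.Pairwise (· < ·) then 0
    else ((splitAll (l ++ [l.foldr Nat.max 0 + 1])).map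
      (fun p => desL p + weightAux fuel p)).sum

/-- The weight of a permutation viewed as a sequence. -/
def weightL (l : List ℕ) : ℕ := weightAux ((l.length + 2) ^ 2) l

/-- `l` is a permutation of `[n] = {1,…,n}` written as a sequence. -/
def IsPermList (n : ℕ) (l : List ℕ) : Prop := l.Perm (List.range' 1 n)

theorem desL_eq_zero_of_pairwise : ∀ {l : List ℕ}, l.Pairwise (· < ·) → desL l = 0
  | [], _ | [_], _ => rfl
  | a :: b :: t, h => by
    have hab : a < b := List.rel_of_pairwise_cons h List.mem_cons_self
    simp [desL, Nat.not_lt.2 hab.le, desL_eq_zero_of_pairwise h.of_cons]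

theorem desL_append_of_lt {l t : List ℕ} (ht : t.Pairwise (· < ·))
    (hlt : ∀ a ∈ l, ∀ b ∈ t, a < b) : desL (l ++ t) = desL l := by
  induction l with
  | nil => exact desL_eq_zero_of_pairwise ht
  | cons a l ih =>
    have ih := ih fun x hx => hlt x (List.mem_cons_of_mem a hx)
    rcases l with _ | ⟨b, l⟩
    · rcases t with _ | ⟨b, t⟩
      · rfl
      · simpa [desL, Nat.not_lt.2 (hlt a (by simp) b (by simp)).le] using ih
    · simp only [List.cons_append, desL] at ih ⊢
      rw [ih]

theorem le_foldr_min {l : List ℕ} {a m : ℕ} (ha : m ≤ a) (hle : ∀ x ∈ l, m ≤ x) :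
    m ≤ l.foldr Nat.min a := by
  induction l with
  | nil => exact ha
  | cons b l ih =>
    simp only [List.forall_mem_cons] at hle
    exact Nat.le_min.2 ⟨hle.1, ih hle.2⟩

theorem foldr_min_eq_of_mem {l : List ℕ} {a m : ℕ} (hm : m ∈ l) (hle : ∀ x ∈ l, m ≤ x)
    (ha : m ≤ a) : l.foldr Nat.min a = m := by
  induction l with
  | nil => simp at hm
  | cons b l ih =>
    simp only [List.forall_mem_cons] at hle
    rw [List.foldr_cons]
    rcases List.mem_cons.1 hm with rfl | hm
    · exact Nat.min_eq_left (le_foldr_min ha hle.2)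
    · rw [ih hm hle.2]
      exact Nat.min_eq_right hle.1

theorem lt_foldr_max_succ {l : List ℕ} {x : ℕ} (hx : x ∈ l) : x < l.foldr Nat.max 0 + 1 :=
  Nat.lt_succ_of_le (List.le_max_of_le' 0 hx le_rfl)

theorem exists_eq_append_cons_notMem {α : Type*} {a : α} {l : List α} (h : a ∈ l) :
    ∃ s t, l = s ++ a :: t ∧ a ∉ s := by
  induction l with
  | nil => simp at h
  | cons b l ih =>
    by_cases hb : b = a
    · exact ⟨[], l, by simp [hb], List.not_mem_nil⟩
    · obtain ⟨s, t, rfl, hs⟩ := ih (by simpa [Ne.symm hb] using h)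
      exact ⟨b :: s, t, rfl, by simp [hs, Ne.symm hb]⟩

theorem exists_eq_append_cons_min {α : Type*} [LinearOrder α] {l : List α} (hl : l ≠ []) :
    ∃ A m B, l = A ++ m :: B ∧ (∀ x ∈ A, m < x) ∧ ∀ x ∈ B, m ≤ x := by
  obtain ⟨m, hm, hle⟩ : ∃ m ∈ l, ∀ x ∈ l, m ≤ x :=
    ⟨l.min hl, List.min_mem hl, fun x hx => List.min_le_of_mem hx⟩
  obtain ⟨A, B, rfl, hA⟩ := exists_eq_append_cons_notMem hm
  refine ⟨A, m, B, rfl, fun x hx => ?_, fun x hx => hle x (by simp [hx])⟩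
  exact lt_of_le_of_ne (hle x (by simp [hx])) (by rintro rfl; exact hA hx)

theorem length_le_of_mem_splitLeftAux :
    ∀ {fuel : ℕ} {l p : List ℕ}, p ∈ splitLeftAux fuel l → p.length ≤ l.length
  | 0, _, _, hp | _ + 1, [], _, hp => by simp [splitLeftAux] at hp
  | fuel + 1, a :: l, p, hp => by
    rcases List.mem_cons.1 hp with rfl | hp
    · exact List.length_take_le' _ _
    · exact (length_le_of_mem_splitLeftAux hp).trans (List.drop_sublist _ _).length_le

theorem length_le_of_mem_splitLeft {l p : List ℕ} (hp : p ∈ splitLeft l) :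
    p.length ≤ l.length :=
  length_le_of_mem_splitLeftAux hp

theorem splitAll_append_cons {A B : List ℕ} {m : ℕ} (hA : ∀ x ∈ A, m < x)
    (hB : ∀ x ∈ B, m ≤ x) : splitAll (A ++ m :: B) = splitLeft A ++ [[m]] ++ [B] := by
  have hle : ∀ x ∈ A ++ m :: B, m ≤ x := by
    intro x hx
    rcases List.mem_append.1 hx with hx | hx
    · exact (hA x hx).le
    · exact List.forall_mem_cons.2 ⟨le_rfl, hB⟩ x hx
  have hmin : (A ++ m :: B).foldr Nat.min ((A ++ m :: B).headD 0) = m := by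
    refine foldr_min_eq_of_mem (by simp) hle (hle _ ?_)
    cases A <;> simp
  have hidx : (A ++ m :: B).idxOf m = A.length := by
    rw [List.idxOf_append_of_notMem fun h => (hA m h).false, List.idxOf_cons_self]; rfl
  have hdrop : (A ++ m :: B).drop (A.length + 1) = B := by
    rw [List.append_cons, List.drop_left' (by simp)]
  simp only [splitAll, hmin, hidx, hdrop, List.take_left]

theorem weightAux_of_pairwise {l : List ℕ} (h : l.Pairwise (· < ·)) (fuel : ℕ) :
    weightAux fuel l = 0 := by
  cases fuel <;> simp [weightAux, h]

theorem pairwise_append_foldr_max_succ {L t : List ℕ} (ht : t.Pairwise (· < ·)) (htL : t ⊆ L) :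
    (t ++ [L.foldr Nat.max 0 + 1]).Pairwise (· < ·) :=
  List.pairwise_append.2 ⟨ht, List.pairwise_singleton _ _, by
    simpa using fun b hb => lt_foldr_max_succ (htL hb)⟩

theorem weightAux_succ_append_cons (fuel : ℕ) {A B : List ℕ} {m : ℕ} (hA : ∀ x ∈ A, m < x)
    (hB : ∀ x ∈ B, m ≤ x) :
    weightAux (fuel + 1) (A ++ m :: B) =
      ((splitLeft A).map fun p => desL p + weightAux fuel p).sum + desL B +
        weightAux fuel (B ++ [(A ++ m :: B).foldr Nat.max 0 + 1]) := by
  set top := (A ++ m :: B).foldr Nat.max 0 + 1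
  have hBtop : ∀ a ∈ B, ∀ b ∈ [top], a < b := by
    simp only [List.mem_singleton, forall_eq]
    exact fun a ha => lt_foldr_max_succ (by simp [ha])
  by_cases hs : (A ++ m :: B).Pairwise (· < ·)
  · obtain rfl : A = [] := List.eq_nil_iff_forall_not_mem.2 fun x hx =>
      (hA x hx).asymm (List.pairwise_append.1 hs |>.2.2 x hx m List.mem_cons_self)
    have hBs : B.Pairwise (· < ·) := (List.pairwise_cons.1 hs).2
    rw [weightAux_of_pairwise hs, desL_eq_zero_of_pairwise hBs, weightAux_of_pairwise
      (pairwise_append_foldr_max_succ hBs fun x hx => by simp [hx])]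
    rfl
  · have hlong : ¬((A ++ m :: B).length ≤ 1 ∨ (A ++ m :: B).Pairwise (· < ·)) := by
      rintro (hlen | hs')
      · obtain ⟨rfl, rfl⟩ : A = [] ∧ B = [] := by
          simp only [List.length_append, List.length_cons] at hlen
          rw [← List.length_eq_zero_iff, ← List.length_eq_zero_iff]
          omega
        exact hs (List.pairwise_singleton _ _)
      · exact hs hs'
    have hBt : ∀ x ∈ B ++ [top], m ≤ x := by
      simp only [List.mem_append, List.mem_singleton]
      rintro x (hx | rfl)
      exacts [hB x hx, (lt_foldr_max_succ (by simp)).le]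
    rw [weightAux, if_neg hlong, List.append_assoc, List.cons_append,
      splitAll_append_cons hA hBt]
    simp only [List.map_append, List.sum_append, List.map_singleton, List.sum_singleton,
      desL_append_of_lt (List.pairwise_singleton _ _) hBtop,
      weightAux_of_pairwise (List.pairwise_singleton _ m), desL]
    omega

theorem weightAux_append_eq_weightL {l t : List ℕ} {fuel : ℕ} (ht : t.Pairwise (· < ·))
    (hlt : ∀ a ∈ l, ∀ b ∈ t, a < b) (hfuel : l.length < fuel) :
    weightAux fuel (l ++ t) = weightL l := by
  induction hn : l.length using Nat.strong_induction_on generalizing l t fuel with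
  | _ n ih =>
  rcases eq_or_ne l [] with rfl | hl
  · rw [List.nil_append, weightAux_of_pairwise ht, weightL, weightAux_of_pairwise .nil]
  obtain ⟨A, m, B, rfl, hA, hB⟩ := exists_eq_append_cons_min hl
  have hAB : A.length + B.length + 1 = n := by simp only [← hn, List.length_append, List.length_cons]; omega
  have key : ∀ t fuel, t.Pairwise (· < ·) → (∀ a ∈ A ++ m :: B, ∀ b ∈ t, a < b) → n < fuel →
      weightAux fuel (A ++ m :: B ++ t) =
        ((splitLeft A).map fun p => desL p + weightL p).sum + desL B + weightL B := by
    intro t fuel ht hlt hfuel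
    obtain ⟨g, rfl⟩ : ∃ g, fuel = g + 1 := ⟨fuel - 1, by omega⟩
    have hBt : ∀ a ∈ B, ∀ b ∈ t, a < b := fun a ha => hlt a (by simp [ha])
    rw [List.append_assoc, List.cons_append, weightAux_succ_append_cons g hA ?_,
      desL_append_of_lt ht hBt, List.append_assoc, ih B.length (by omega)
        (pairwise_append_foldr_max_succ ht (by intro x hx; simp [hx])) ?_ (by omega) rfl]
    · congr 3
      refine List.map_congr_left fun p hp => ?_
      have := length_le_of_mem_splitLeft hp
      have hp := ih p.length (by omega) (t := []) (fuel := g) .nil (by simp) (by omega) rfl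
      rw [List.append_nil] at hp
      rw [hp]
    · simp only [List.mem_append, List.mem_singleton]
      rintro a ha b (hb | rfl)
      exacts [hBt a ha b hb, lt_foldr_max_succ (by simp [ha])]
    · simp only [List.mem_append]
      rintro x (hx | hx)
      exacts [hB x hx, (hlt m (by simp) x hx).le]
  rw [key t fuel ht hlt (hn ▸ hfuel), ← key [] ((n + 2) ^ 2) .nil (by simp) (by nlinarith),
    List.append_nil, weightL, hn]

theorem weightAux_eq_weightL {l : List ℕ} {fuel : ℕ} (hfuel : l.length < fuel) :
    weightAux fuel l = weightL l := by
  simpa using weightAux_append_eq_weightL (t := []) .nil (by simp) hfuel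

theorem weightL_append_cons_of_lt {πL πR : List ℕ} {m : ℕ} (hL : ∀ x ∈ πL, m < x)
    (hR : ∀ x ∈ πR, m < x) :
    weightL (πL ++ m :: πR) = weightL (πL ++ [m]) + weightL πR + desL πR := by
  set fuel := (πL ++ m :: πR).length
  rw [← weightAux_eq_weightL (Nat.lt_succ_self fuel),
    ← weightAux_eq_weightL (fuel := fuel + 1) (l := πL ++ [m]) (by simp [fuel]),
    weightAux_succ_append_cons fuel hL fun x hx => (hR x hx).le,
    weightAux_succ_append_cons fuel hL (B := []) (by simp),
    weightAux_append_eq_weightL (List.pairwise_singleton _ _) ?_ (by simp only [fuel, List.length_append, List.length_cons]; omega)]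
  · simp only [List.nil_append, weightAux_of_pairwise (List.pairwise_singleton _ _), desL]
    omega
  · intro x hx y hy
    rw [List.mem_singleton.1 hy]
    exact lt_foldr_max_succ (by simp [hx])

theorem weight_split_general (n : ℕ) (πL πR : List ℕ)
    (hperm : IsPermList n (πL ++ [1] ++ πR)) :
    weightL (πL ++ [1] ++ πR) = weightL (πL ++ [1]) + weightL πR + desL πR := by
  rw [List.append_assoc, List.singleton_append] at hperm ⊢
  have hperm' : (1 :: (πL ++ πR)).Perm (List.range' 1 n) := List.perm_middle.symm.trans hperm
  have h1 : 1 ∉ πL ++ πR := (List.nodup_cons.1 (hperm'.nodup_iff.2 List.nodup_range')).1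
  have hgt : ∀ x ∈ πL ++ πR, 1 < x := fun x hx =>
    lt_of_le_of_ne (List.mem_range'_1.1 (hperm'.mem_iff.1 (List.mem_cons_of_mem 1 hx))).1
      (by rintro rfl; exact h1 hx)
  exact weightL_append_cons_of_lt (fun x hx => hgt x (List.mem_append_left _ hx))
    (fun x hx => hgt x (List.mem_append_right _ hx))

/-- If `σ = πL · 1 · πR` is a permutation of `[n]` with `d` descents, `πL` of
length `ℓ` with `q` descents and `πR` with `d-q-1` descents, then
`w(σ) = w(πL · 1) + w(πR) + des(πR)`. -/
theorem weight_split (n ℓ d q : ℕ) (πL πR : List ℕ) (hn : 2 ≤ n)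
    (hperm : IsPermList n (πL ++ [1] ++ πR)) (hℓ : πL.length = ℓ)
    (hq : desL πL = q) (hr : desL πR + q + 1 = d)
    (hd : desL (πL ++ [1] ++ πR) = d) :
    weightL (πL ++ [1] ++ πR) = weightL (πL ++ [1]) + weightL πR + desL πR :=
  weight_split_general n πL πR hperm
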